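/- Let A and B be n×n Hermitian matrices with eigenvalues λ_1(A) ≤ ... ≤ λ_n(A) and λ_1(B) ≤ ... ≤ λ_n(B) (each listed in increasing order with multiplicity). Then max_{1 ≤ i ≤ n} |λ_i(A) - λ_i(B)| ≤ ‖A - B‖₂, where ‖·‖₂ is the spectral (operator) norm. -/

import Mathlib

open Matrix Finset
open scoped RealInnerProductSpace

noncomputable def sortedEig {n : ℕ} {A : Matrix (Fin n) (Fin n) ℝ}
    (hA : A.IsHermitian) : Fin n → ℝ :=
  hA.eigenvalues ∘ Tuple.sort hA.eigenvalues

section aux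
variable {n : ℕ}

local notation "E" => EuclideanSpace ℝ (Fin n)

lemma aux_lower (T : E →L[ℝ] E) (v : OrthonormalBasis (Fin n) ℝ E) (μ : Fin n → ℝ)
    (hT : ∀ j, T (v j) = μ j • v j) (s : Finset (Fin n)) (c : ℝ) (hc : ∀ j ∈ s, c ≤ μ j)
    (x : E) (hx : x ∈ Submodule.span ℝ (v '' (s : Set (Fin n)))) (hnx : ‖x‖ = 1) :
    c ≤ ⟪x, T x⟫ := by
  have hzero : ∀ j ∉ s, ⟪v j, x⟫ = 0 := by
    intro j hj
    have : x ∈ (ℝ ∙ (v j))ᗮ := by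
      refine Submodule.span_le.mpr ?_ hx
      rintro y ⟨k, hk, rfl⟩
      rw [SetLike.mem_coe, Submodule.mem_orthogonal_singleton_iff_inner_right]
      exact v.orthonormal.2 (fun h => hj (h ▸ hk))
    exact Submodule.mem_orthogonal_singleton_iff_inner_right.mp this
  have hxr : ∑ j, ⟪v j, x⟫ • v j = x := v.sum_repr' x
  have hTx : T x = ∑ j, ⟪v j, x⟫ • (μ j • v j) := by
    conv_lhs => rw [← hxr]
    rw [map_sum]
    simp only [_root_.map_smul, hT]
  have hinner : ⟪x, T x⟫ = ∑ j, μ j * ⟪v j, x⟫ ^ 2 := by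
    rw [hTx, inner_sum]
    refine Finset.sum_congr rfl fun j _ => ?_
    rw [real_inner_smul_right, real_inner_smul_right, real_inner_comm]
    ring
  have hns : ∑ j, ⟪v j, x⟫ ^ 2 = 1 := by
    have h1 : ⟪x, x⟫ = ∑ j, ⟪v j, x⟫ ^ 2 := by
      have h2 : ⟪x, x⟫ = ⟪x, ∑ j, ⟪v j, x⟫ • v j⟫ := by rw [hxr]
      rw [h2, inner_sum]
      refine Finset.sum_congr rfl fun j _ => ?_
      rw [real_inner_smul_right, real_inner_comm]
      ring
    rw [← h1, real_inner_self_eq_norm_sq, hnx, one_pow]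
  calc c = ∑ j, c * ⟪v j, x⟫ ^ 2 := by rw [← Finset.mul_sum, hns, mul_one]
    _ ≤ ∑ j, μ j * ⟪v j, x⟫ ^ 2 := by
        refine Finset.sum_le_sum fun j _ => ?_
        by_cases hj : j ∈ s
        · exact mul_le_mul_of_nonneg_right (hc j hj) (sq_nonneg _)
        · rw [hzero j hj]; simp
    _ = ⟪x, T x⟫ := hinner.symm

lemma aux_upper (T : E →L[ℝ] E) (v : OrthonormalBasis (Fin n) ℝ E) (μ : Fin n → ℝ)
    (hT : ∀ j, T (v j) = μ j • v j) (s : Finset (Fin n)) (c : ℝ) (hc : ∀ j ∈ s, μ j ≤ c)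
    (x : E) (hx : x ∈ Submodule.span ℝ (v '' (s : Set (Fin n)))) (hnx : ‖x‖ = 1) :
    ⟪x, T x⟫ ≤ c := by
  have := aux_lower (-T) v (-μ) (fun j => by simp [hT j, neg_smul])
    s (-c) (fun j hj => neg_le_neg (hc j hj)) x hx hnx
  simpa [neg_le, inner_neg_right] using this
end aux

lemma sortedEig_monotone {n : ℕ} {A : Matrix (Fin n) (Fin n) ℝ} (hA : A.IsHermitian) :
    Monotone (sortedEig hA) := Tuple.monotone_sort hA.eigenvalues

lemma eig_clm {n : ℕ} {A : Matrix (Fin n) (Fin n) ℝ} (hA : A.IsHermitian) (j : Fin n) :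
    toEuclideanCLM (𝕜 := ℝ) A (hA.eigenvectorBasis j)
      = hA.eigenvalues j • hA.eigenvectorBasis j := by
  apply (WithLp.equiv 2 (Fin n → ℝ)).injective
  simp only [WithLp.equiv_apply, ofLp_toEuclideanCLM]
  simpa using hA.mulVec_eigenvectorBasis j

lemma finrank_span_onb {n : ℕ} (v : OrthonormalBasis (Fin n) ℝ (EuclideanSpace ℝ (Fin n)))
    (s : Finset (Fin n)) :
    Module.finrank ℝ (Submodule.span ℝ (⇑v '' (s : Set (Fin n)))) = s.card := by
  classical
  have hinj : Function.Injective ⇑v := v.toBasis.injective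
  have hli : LinearIndependent ℝ (fun x : (s : Set (Fin n)) => v x) :=
    v.orthonormal.linearIndependent.comp _ Subtype.coe_injective
  have hli2 : LinearIndependent ℝ
      (fun x : (⇑v '' (s : Set (Fin n)) : Set (EuclideanSpace ℝ (Fin n))) =>
        (x : EuclideanSpace ℝ (Fin n))) :=
    LinearIndepOn.id_image (v := ⇑v) (s := (s : Set (Fin n))) hli
  letI : Fintype (⇑v '' (s : Set (Fin n)) : Set (EuclideanSpace ℝ (Fin n))) :=
    (s.finite_toSet.image ⇑v).fintype
  rw [finrank_span_set_eq_card hli2, Set.toFinset_image]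
  simp [Finset.card_image_of_injective _ hinj]

lemma weyl_one {n : ℕ} (A B : Matrix (Fin n) (Fin n) ℝ)
    (hA : A.IsHermitian) (hB : B.IsHermitian) (i : Fin n) :
    sortedEig hA i ≤ sortedEig hB i + ‖toEuclideanCLM (𝕜 := ℝ) (A - B)‖ := by
  classical
  set vA : OrthonormalBasis (Fin n) ℝ (EuclideanSpace ℝ (Fin n)) :=
    hA.eigenvectorBasis.reindex (Tuple.sort hA.eigenvalues).symm with hvAdef
  set vB : OrthonormalBasis (Fin n) ℝ (EuclideanSpace ℝ (Fin n)) :=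
    hB.eigenvectorBasis.reindex (Tuple.sort hB.eigenvalues).symm with hvBdef
  have hvA : ∀ j, toEuclideanCLM (𝕜 := ℝ) A (vA j) = sortedEig hA j • vA j := by
    intro j
    simp [hvAdef, OrthonormalBasis.reindex_apply, eig_clm, sortedEig]
  have hvB : ∀ j, toEuclideanCLM (𝕜 := ℝ) B (vB j) = sortedEig hB j • vB j := by
    intro j
    simp [hvBdef, OrthonormalBasis.reindex_apply, eig_clm, sortedEig]
  set V := Submodule.span ℝ (⇑vA '' ((Finset.Ici i : Finset (Fin n)) : Set (Fin n))) with hV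
  set W := Submodule.span ℝ (⇑vB '' ((Finset.Iic i : Finset (Fin n)) : Set (Fin n))) with hW
  have hdV : Module.finrank ℝ V = n - i := by rw [hV, finrank_span_onb, Fin.card_Ici]
  have hdW : Module.finrank ℝ W = i + 1 := by rw [hW, finrank_span_onb, Fin.card_Iic]
  -- nontrivial intersection
  have hne : V ⊓ W ≠ ⊥ := by
    intro hbot
    have h1 := Submodule.finrank_sup_add_finrank_inf_eq V W
    rw [hbot, finrank_bot, add_zero, hdV, hdW] at h1
    have h2 : Module.finrank ℝ (V ⊔ W : Submodule ℝ (EuclideanSpace ℝ (Fin n))) ≤ n := by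
      simpa using Submodule.finrank_le (V ⊔ W)
    have := i.isLt
    omega
  obtain ⟨x, hxVW, hx0⟩ := Submodule.exists_mem_ne_zero_of_ne_bot hne
  set y : EuclideanSpace ℝ (Fin n) := ‖x‖⁻¹ • x with hy
  have hny : ‖y‖ = 1 := norm_smul_inv_norm hx0
  have hyV : y ∈ V := V.smul_mem _ hxVW.1
  have hyW : y ∈ W := W.smul_mem _ hxVW.2
  have hlow : sortedEig hA i ≤ ⟪y, toEuclideanCLM (𝕜 := ℝ) A y⟫ :=
    aux_lower _ vA _ hvA _ _ (fun j hj => sortedEig_monotone hA (Finset.mem_Ici.mp hj)) y hyV hny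
  have hup : ⟪y, toEuclideanCLM (𝕜 := ℝ) B y⟫ ≤ sortedEig hB i :=
    aux_upper _ vB _ hvB _ _ (fun j hj => sortedEig_monotone hB (Finset.mem_Iic.mp hj)) y hyW hny
  have hdiff : ⟪y, toEuclideanCLM (𝕜 := ℝ) A y⟫ - ⟪y, toEuclideanCLM (𝕜 := ℝ) B y⟫
      ≤ ‖toEuclideanCLM (𝕜 := ℝ) (A - B)‖ := by
    have h1 : ⟪y, toEuclideanCLM (𝕜 := ℝ) A y⟫ - ⟪y, toEuclideanCLM (𝕜 := ℝ) B y⟫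
        = ⟪y, toEuclideanCLM (𝕜 := ℝ) (A - B) y⟫ := by
      rw [map_sub]
      simp [inner_sub_right]
    rw [h1]
    calc ⟪y, toEuclideanCLM (𝕜 := ℝ) (A - B) y⟫
        ≤ ‖y‖ * ‖toEuclideanCLM (𝕜 := ℝ) (A - B) y‖ := real_inner_le_norm _ _
      _ ≤ ‖y‖ * (‖toEuclideanCLM (𝕜 := ℝ) (A - B)‖ * ‖y‖) := by
          gcongr
          exact ContinuousLinearMap.le_opNorm _ _
      _ = ‖toEuclideanCLM (𝕜 := ℝ) (A - B)‖ := by rw [hny]; ring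
  linarith

theorem stmt_10 (n : ℕ) (A B : Matrix (Fin n) (Fin n) ℝ)
    (hA : A.IsHermitian) (hB : B.IsHermitian) :
    ∀ i : Fin n, |sortedEig hA i - sortedEig hB i|
      ≤ ‖Matrix.toEuclideanCLM (𝕜 := ℝ) (A - B)‖ := by
  intro i
  have hsymm : ‖toEuclideanCLM (𝕜 := ℝ) (B - A)‖ = ‖toEuclideanCLM (𝕜 := ℝ) (A - B)‖ := by
    rw [← neg_sub A B, map_neg, norm_neg]
  rw [abs_sub_le_iff]
  constructor
  · linarith [weyl_one A B hA hB i]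
  · linarith [weyl_one B A hB hA i, hsymm.le]
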